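/- Suppose C₀ and C₁ are cosets of H_{λ₀} and H_{λ₁} respectively with C₀ ≠ C₁, and p, q are (possibly infinite) geodesic paths in Γ(G,X⊔H) starting at p_-, q_- ∈ G respectively, each penetrating both C₀ and C₁, with d_{X∪H}(p_-,C₀) < d_{X∪H}(p_-,C₁) and d_{X∪H}(q_-,C₀) < d_{X∪H}(q_-,C₁). Then d̂_{λ₀}(p_out(C₀), q_out(C₀)) ≤ 4C and d̂_{λ₁}(p_in(C₁), q_in(C₁)) ≤ 4C. -/

import Mathlib

open scoped ENNReal

noncomputable section

namespace ArXiv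

/-! ### Gromov products, hyperbolicity and the Gromov boundary,
for a general distance function -/

variable {α : Type*}

/-- The Gromov product of `x` and `y` at `o` with respect to the distance function `d`. -/
def gprod (d : α → α → ℝ) (x y o : α) : ℝ := (d x o + d y o - d x y) / 2

/-- The four-point δ-hyperbolicity condition. -/
def HyperbolicWith (d : α → α → ℝ) (δ : ℝ) : Prop :=
  ∀ w x y z : α, min (gprod d x y w) (gprod d y z w) - δ ≤ gprod d x z w

/-- Gromov hyperbolicity of the distance function `d`. -/
def IsHyperbolic (d : α → α → ℝ) : Prop := ∃ δ : ℝ, 0 ≤ δ ∧ HyperbolicWith d δ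

/-- A sequence converges to infinity: the Gromov products at some (equivalently, any)
basepoint tend to infinity. -/
def ConvInf (d : α → α → ℝ) (x : ℕ → α) : Prop :=
  ∀ o : α, ∀ R : ℝ, ∃ N : ℕ, ∀ i, N ≤ i → ∀ j, N ≤ j → R ≤ gprod d (x i) (x j) o

/-- Sequences converging to infinity. -/
abbrev BSeq (d : α → α → ℝ) := {x : ℕ → α // ConvInf d x}

/-- The equivalence of sequences converging to infinity defining the Gromov boundary. -/
def BRel (d : α → α → ℝ) (x y : BSeq d) : Prop :=
  ∀ o : α, ∀ R : ℝ, ∃ N : ℕ, ∀ i, N ≤ i → ∀ j, N ≤ j → R ≤ gprod d (x.1 i) (y.1 j) o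

/-- The (sequential) Gromov boundary of `(α, d)`. -/
abbrev Bdry (d : α → α → ℝ) := Quot (BRel d)

/-- The extension of the Gromov product at `o` to boundary points. -/
def bgp (d : α → α → ℝ) (o : α) (ξ η : Bdry d) : EReal :=
  sSup {r : EReal | ∃ x y : BSeq d, Quot.mk (BRel d) x = ξ ∧ Quot.mk (BRel d) y = η ∧
    r = Filter.liminf
      (fun pq : ℕ × ℕ => ((gprod d (x.1 pq.1) (y.1 pq.2) o : ℝ) : EReal)) Filter.atTop}

/-- The canonical topology on the Gromov boundary, generated by the sets
`{η | (ξ,η)_o > n}`. -/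
def bdryTop (d : α → α → ℝ) : TopologicalSpace (Bdry d) :=
  TopologicalSpace.generateFrom
    {U : Set (Bdry d) | ∃ (ξ : Bdry d) (o : α) (n : ℝ), U = {η | (n : EReal) < bgp d o ξ η}}

/-! ### Relative Cayley graphs and hyperbolically embedded subgroups -/

variable {G : Type*} [Group G] {Λ : Type*}

/-- Labels of (positive) edges of the relative Cayley graph `Γ(G, X ⊔ H)`:
letters from `X` and letters from `H_λ \ {1}`, for each `λ`, with disjoint unions
taken as sets of labels. -/
inductive RelLab (X : Set G) (H : Λ → Subgroup G) : Type _
  | xlab (g : G) (hg : g ∈ X) : RelLab X H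
  | hlab (l : Λ) (g : G) (hg : g ∈ H l) (hne : g ≠ 1) : RelLab X H

/-- The group element underlying a label. -/
def RelLab.val {X : Set G} {H : Λ → Subgroup G} : RelLab X H → G
  | .xlab g _ => g
  | .hlab _ g _ _ => g

/-- The label is a letter of `H l`. -/
def RelLab.isH {X : Set G} {H : Λ → Subgroup G} (l : Λ) : RelLab X H → Prop
  | .xlab _ _ => False
  | .hlab l' _ _ _ => l' = l

/-- The value of a directed edge: an edge together with an orientation
(the Cayley graph being undirected, an edge may be traversed both ways). -/
def edgeVal {X : Set G} {H : Λ → Subgroup G} (e : RelLab X H × Bool) : G :=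
  if e.2 then e.1.val else e.1.val⁻¹

/-- The `i`-th vertex of the edge path starting at `f` and reading the directed
edges of `L`. -/
def chainVert {X : Set G} {H : Λ → Subgroup G} (f : G) (L : List (RelLab X H × Bool))
    (i : ℕ) : G :=
  f * ((L.take i).map edgeVal).prod

/-- The graph metric `d_{X∪H}` of the relative Cayley graph `Γ(G, X ⊔ H)`. -/
def rdist (X : Set G) (H : Λ → Subgroup G) (f g : G) : ℝ :=
  sInf {r : ℝ | ∃ L : List (RelLab X H × Bool),
    f * (L.map edgeVal).prod = g ∧ r = (L.length : ℝ)}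

/-- Distance from a point to a set in `Γ(G, X ⊔ H)`. -/
def rdistPtSet (X : Set G) (H : Λ → Subgroup G) (f : G) (B : Set G) : ℝ :=
  sInf {r : ℝ | ∃ b ∈ B, r = rdist X H f b}

/-- Distance between two sets in `Γ(G, X ⊔ H)`. -/
def rdistSets (X : Set G) (H : Λ → Subgroup G) (A B : Set G) : ℝ :=
  sInf {r : ℝ | ∃ a ∈ A, ∃ b ∈ B, r = rdist X H a b}

/-- The relative metric `d̂_λ`: the infimum of the lengths of paths in `Γ(G, X ⊔ H)`
from `f` to `g` containing no edge of the subgraph `Γ(H_λ, H_λ∖{1})`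
(`∞` if there is no such path). -/
def hatd (X : Set G) (H : Λ → Subgroup G) (l : Λ) (f g : G) : ℝ≥0∞ :=
  sInf {r : ℝ≥0∞ | ∃ L : List (RelLab X H × Bool),
    f * (L.map edgeVal).prod = g ∧
    (∀ i : ℕ, ∀ e ∈ L[i]?, ¬(chainVert f L i ∈ H l ∧ (Prod.fst e).isH l)) ∧
    r = (L.length : ℝ≥0∞)}

/-- `{H_λ}_{λ∈Λ}` is hyperbolically embedded in `(G, X)`:
`X ∪ ⋃ H_λ` generates `G`, the relative Cayley graph is hyperbolic, and each
relative metric `d̂_λ` is locally finite. -/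
def HypEmb (X : Set G) (H : Λ → Subgroup G) : Prop :=
  Subgroup.closure (X ∪ ⋃ l : Λ, (H l : Set G)) = ⊤ ∧
  IsHyperbolic (rdist X H) ∧
  ∀ (l : Λ) (n : ℕ), {h : G | h ∈ H l ∧ hatd X H l 1 h ≤ (n : ℝ≥0∞)}.Finite

/-- Paths (finite, when `len = n`, or infinite rays, when `len = ⊤`) in the relative
Cayley graph `Γ(G, X ⊔ H)`. -/
structure RPath (X : Set G) (H : Λ → Subgroup G) where
  len : ℕ∞
  vert : ℕ → G
  lab : ℕ → RelLab X H × Bool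
  step : ∀ i : ℕ, (i : ℕ∞) < len → vert (i + 1) = vert i * edgeVal (lab i)

namespace RPath

variable {X : Set G} {H : Λ → Subgroup G}

/-- A path is geodesic. -/
def IsGeodesic (p : RPath X H) : Prop :=
  ∀ i j : ℕ, i ≤ j → (j : ℕ∞) ≤ p.len →
    rdist X H (p.vert i) (p.vert j) = ((j - i : ℕ) : ℝ)

/-- A (necessarily finite) path goes from `f` to `g`. -/
def FromTo (p : RPath X H) (f g : G) : Prop :=
  p.vert 0 = f ∧ ∃ n : ℕ, p.len = (n : ℕ∞) ∧ p.vert n = g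

/-- An infinite path. -/
def IsRay (p : RPath X H) : Prop := p.len = ⊤

/-- `q` is a subpath of `p`. -/
def IsSubpath (q p : RPath X H) : Prop :=
  ∃ a : ℕ, ((a : ℕ∞) + q.len ≤ p.len) ∧
    (∀ k : ℕ, (k : ℕ∞) ≤ q.len → q.vert k = p.vert (a + k)) ∧
    (∀ k : ℕ, (k : ℕ∞) < q.len → q.lab k = p.lab (a + k))

/-- `p` penetrates the coset `B` of `H l` with entrance point `p.vert i` and exit point
`p.vert j`: the edges `i,…,j-1` form an `H l`-component of `p` starting in `B`. -/
def PenetratesAt (p : RPath X H) (l : Λ) (B : Set G) (i j : ℕ) : Prop :=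
  i < j ∧ (j : ℕ∞) ≤ p.len ∧ p.vert i ∈ B ∧
  (∀ k : ℕ, i ≤ k → k < j → (p.lab k).1.isH l) ∧
  (i = 0 ∨ ¬ (p.lab (i - 1)).1.isH l) ∧
  ((j : ℕ∞) = p.len ∨ ¬ (p.lab j).1.isH l)

/-- `p` penetrates the coset `B` of `H l`. -/
def Penetrates (p : RPath X H) (l : Λ) (B : Set G) : Prop :=
  ∃ i j : ℕ, p.PenetratesAt l B i j

/-- `p` essentially penetrates the coset `B` of `H l` (with parameter `D`). -/
def EssPenetrates (p : RPath X H) (l : Λ) (B : Set G) (Dc : ℝ) : Prop :=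
  ∃ i j : ℕ, p.PenetratesAt l B i j ∧ ENNReal.ofReal Dc < hatd X H l (p.vert i) (p.vert j)

end RPath

/-- `B` is a (left) coset of `H l`. -/
def Coset (H : Λ → Subgroup G) (l : Λ) (B : Set G) : Prop :=
  ∃ x : G, B = {g : G | x⁻¹ * g ∈ H l}

/-- The set `S(f,g;D)` of `(f,g;D)`-separating cosets: cosets (recorded together with
the index of their subgroup) essentially penetrated by some geodesic of `Γ(G,X⊔H)`
from `f` to `g`. -/
def Sep (X : Set G) (H : Λ → Subgroup G) (Dc : ℝ) (f g : G) : Set (Λ × Set G) :=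
  {lB | Coset H lB.1 lB.2 ∧
    ∃ p : RPath X H, p.IsGeodesic ∧ p.FromTo f g ∧ p.EssPenetrates lB.1 lB.2 Dc}

/-- The set `S(γ;D)` of separating cosets of a geodesic ray. -/
def SepRay (X : Set G) (H : Λ → Subgroup G) (Dc : ℝ) (p : RPath X H) : Set (Λ × Set G) :=
  ⋃ n : ℕ, Sep X H Dc (p.vert 0) (p.vert n)

/-- The set `Y = {y ∈ G | S(1,y;D) = ∅}`. -/
def Yset (X : Set G) (H : Λ → Subgroup G) (Dc : ℝ) : Set G := {y : G | Sep X H Dc 1 y = ∅}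

/-- Geodesic polygons in the relative Cayley graph: a closed path of `n` edges,
subdivided into `m` geodesic sides. -/
structure RPolygon (X : Set G) (H : Λ → Subgroup G) where
  n : ℕ
  m : ℕ
  vert : ℕ → G
  lab : ℕ → RelLab X H × Bool
  step : ∀ i : ℕ, i < n → vert (i + 1) = vert i * edgeVal (lab i)
  closed : vert n = vert 0
  corner : ℕ → ℕ
  corner_zero : corner 0 = 0
  corner_last : corner m = n
  corner_mono : ∀ t : ℕ, t < m → corner t ≤ corner (t + 1)
  sides_geodesic : ∀ t : ℕ, t < m → ∀ i j : ℕ, corner t ≤ i → i ≤ j → j ≤ corner (t + 1) →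
    rdist X H (vert i) (vert j) = ((j - i : ℕ) : ℝ)

namespace RPolygon

variable {X : Set G} {H : Λ → Subgroup G}

/-- An `H l`-component of the polygon, considered cyclically: the cyclic edges
`i,…,j-1` are all labelled in `H l`, maximally so. -/
def CompAt (p : RPolygon X H) (l : Λ) (i j : ℕ) : Prop :=
  i < j ∧ i < p.n ∧ j ≤ i + p.n ∧
  (∀ k : ℕ, i ≤ k → k < j → (p.lab (k % p.n)).1.isH l) ∧
  (j = i + p.n ∨
    (¬ (p.lab ((i + p.n - 1) % p.n)).1.isH l ∧ ¬ (p.lab (j % p.n)).1.isH l))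

/-- An isolated `H l`-component of the polygon: one not connected to (i.e. lying in the
same `H l`-coset as) any other `H l`-component of the polygon. -/
def IsolatedAt (p : RPolygon X H) (l : Λ) (i j : ℕ) : Prop :=
  p.CompAt l i j ∧ ∀ i' j' : ℕ, p.CompAt l i' j' → i' % p.n ≠ i % p.n →
    (p.vert (i % p.n))⁻¹ * p.vert (i' % p.n) ∉ H l

end RPolygon

/-- The property of the constant `C`: for every geodesic `m`-gon in `Γ(G,X⊔H)` and every
isolated `H_λ`-component `a` of it, `d̂_λ(a_-,a_+) ≤ mC`. -/
def CBound (X : Set G) (H : Λ → Subgroup G) (Cc : ℝ) : Prop :=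
  ∀ (p : RPolygon X H) (l : Λ) (i j : ℕ), p.IsolatedAt l i j →
    hatd X H l (p.vert (i % p.n)) (p.vert (j % p.n)) ≤ ENNReal.ofReal ((p.m : ℝ) * Cc)

/-- The vertex sequence of the path `γ` converges to infinity with respect to `d` and
its limit point in the boundary `Bdry d` is `ξ`. -/
def RLim {X : Set G} {H : Λ → Subgroup G} (d : G → G → ℝ) (γ : RPath X H)
    (ξ : Bdry d) : Prop :=
  ∃ h : ConvInf d γ.vert, Quot.mk (BRel d) ⟨γ.vert, h⟩ = ξ


section Statement8Aux

variable {X : Set G} {H : Λ → Subgroup G}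

section Aux

def eflip (e : RelLab X H × Bool) : RelLab X H × Bool := (e.1, !e.2)

lemma edgeVal_eflip (e : RelLab X H × Bool) : edgeVal (eflip e) = (edgeVal e)⁻¹ := by
  rcases e with ⟨a, b⟩; cases b <;> simp [eflip, edgeVal]

def flipRev (L : List (RelLab X H × Bool)) : List (RelLab X H × Bool) :=
  (L.map eflip).reverse

lemma flipRev_length (L : List (RelLab X H × Bool)) : (flipRev L).length = L.length := by
  simp [flipRev]

lemma flipRev_prod (L : List (RelLab X H × Bool)) :
    ((flipRev L).map edgeVal).prod = ((L.map edgeVal).prod)⁻¹ := by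
  rw [flipRev, List.map_reverse, List.map_map, List.prod_inv_reverse, List.map_map]
  congr 2
  apply List.map_congr_left
  intro e _
  exact edgeVal_eflip e

lemma isH_val_mem {l : Λ} {e : RelLab X H} (h : e.isH l) : e.val ∈ H l := by
  cases e with
  | xlab g hg => exact absurd h id
  | hlab l' g hg hne => exact (show l' = l from h) ▸ hg

lemma isH_edgeVal_mem {l : Λ} {e : RelLab X H × Bool} (h : e.1.isH l) : edgeVal e ∈ H l := by
  rcases e with ⟨a, b⟩
  cases b
  · exact inv_mem (isH_val_mem h)
  · exact isH_val_mem h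

lemma isH_unique {l l' : Λ} {e : RelLab X H} (h : e.isH l) (h' : e.isH l') : l = l' := by
  cases e with
  | xlab g hg => exact absurd h id
  | hlab l0 g hg hne => exact (show l0 = l from h) ▸ (show l0 = l' from h')

lemma Coset.mem_iff {l : Λ} {B : Set G} (hB : Coset H l B) {g : G} (hg : g ∈ B) (y : G) :
    y ∈ B ↔ g⁻¹ * y ∈ H l := by
  obtain ⟨x, rfl⟩ := hB
  simp only [Set.mem_setOf_eq] at hg ⊢
  constructor
  · intro hy
    have := mul_mem (inv_mem hg) hy
    simpa [mul_assoc] using this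
  · intro hy
    have := mul_mem hg hy
    simpa [mul_assoc] using this

lemma Coset.sub_mem {l : Λ} {B : Set G} (hB : Coset H l B) {g g' : G} (hg : g ∈ B)
    (hg' : g' ∈ B) : g⁻¹ * g' ∈ H l := (hB.mem_iff hg g').mp hg'

lemma Coset.mul_mem' {l : Λ} {B : Set G} (hB : Coset H l B) {g y : G} (hg : g ∈ B)
    (hy : g⁻¹ * y ∈ H l) : y ∈ B := (hB.mem_iff hg y).mpr hy

lemma Coset.eq_of_mem {l : Λ} {B B' : Set G} (hB : Coset H l B) (hB' : Coset H l B')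
    {g : G} (hg : g ∈ B) (hg' : g ∈ B') : B = B' := by
  ext y
  rw [hB.mem_iff hg y, hB'.mem_iff hg' y]

end Aux

lemma rdist_le_length {f g : G} (L : List (RelLab X H × Bool))
    (h : f * (L.map edgeVal).prod = g) : rdist X H f g ≤ (L.length : ℝ) := by
  apply csInf_le
  · exact ⟨0, by rintro r ⟨L', h1, rfl⟩; positivity⟩
  · exact ⟨L, h, rfl⟩

lemma rdist_nonneg {f g : G} : 0 ≤ rdist X H f g :=
  Real.sInf_nonneg (by rintro r ⟨L, h, rfl⟩; positivity)

lemma rdist_self (f : G) : rdist X H f f = 0 :=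
  le_antisymm (by simpa using rdist_le_length ([] : List (RelLab X H × Bool)) (by simp))
    rdist_nonneg

lemma rdist_comm (f g : G) : rdist X H f g = rdist X H g f := by
  unfold rdist
  congr 1
  ext r
  constructor <;> rintro ⟨L, h, rfl⟩ <;>
    exact ⟨flipRev L, by rw [flipRev_prod, ← h]; group, by rw [flipRev_length]⟩

lemma rdist_le_one {l : Λ} {B : Set G} (hB : Coset H l B) {f g : G} (hf : f ∈ B)
    (hg : g ∈ B) : rdist X H f g ≤ 1 := by
  by_cases h : f = g
  · subst h; rw [rdist_self]; norm_num
  · have hm : f⁻¹ * g ∈ H l := hB.sub_mem hf hg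
    have hne : f⁻¹ * g ≠ 1 := by
      intro hcon; exact h (by rwa [inv_mul_eq_one] at hcon)
    have := rdist_le_length (f := f) (g := g)
      [((RelLab.hlab l (f⁻¹ * g) hm hne : RelLab X H), true)]
      (by simp [edgeVal, RelLab.val])
    simpa using this

lemma rdist_eq_one {l : Λ} {B : Set G} (hB : Coset H l B) {f g : G} (hf : f ∈ B)
    (hg : g ∈ B) (hne : f ≠ g) : rdist X H f g = 1 := by
  refine le_antisymm (rdist_le_one hB hf hg) ?_
  apply le_csInf
  · have hm : f⁻¹ * g ∈ H l := hB.sub_mem hf hg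
    have hne1 : f⁻¹ * g ≠ 1 := by
      intro hcon; exact hne (by rwa [inv_mul_eq_one] at hcon)
    exact ⟨1, [((RelLab.hlab l (f⁻¹ * g) hm hne1 : RelLab X H), true)],
      by simp [edgeVal, RelLab.val], by simp⟩
  · rintro r ⟨L, h, rfl⟩
    have : L ≠ [] := by
      rintro rfl; simp at h; exact hne h
    have : 1 ≤ L.length := List.length_pos_iff.mpr this
    exact_mod_cast this

lemma chainVert_zero (f : G) (L : List (RelLab X H × Bool)) : chainVert f L 0 = f := by
  simp [chainVert]

lemma chainVert_succ (f : G) (L : List (RelLab X H × Bool)) (k : ℕ) (hk : k < L.length) :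
    chainVert f L (k + 1) = chainVert f L k * edgeVal (L[k]) := by
  unfold chainVert
  rw [List.map_take, List.map_take, List.prod_take_succ _ k (by simpa using hk), mul_assoc]
  congr 1
  simp

lemma chainVert_length (f : G) (L : List (RelLab X H × Bool)) :
    chainVert f L L.length = f * (L.map edgeVal).prod := by
  simp [chainVert]

lemma chainVert_flipRev {f g : G} (L : List (RelLab X H × Bool))
    (h : f * (L.map edgeVal).prod = g) (i : ℕ) (hi : i ≤ L.length) :
    chainVert g (flipRev L) i = chainVert f L (L.length - i) := by
  induction i with
  | zero => rw [chainVert_zero, Nat.sub_zero, chainVert_length, h]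
  | succ k ih =>
    have hk : k < L.length := hi
    have hkf : k < (flipRev L).length := by rw [flipRev_length]; exact hk
    rw [chainVert_succ g (flipRev L) k hkf, ih (le_of_lt hk)]
    have hget : (flipRev L)[k] = eflip (L[L.length - 1 - k]'(by omega)) := by
      simp [flipRev, List.getElem_reverse]
    rw [hget, edgeVal_eflip]
    have h1 : L.length - k = (L.length - 1 - k) + 1 := by omega
    rw [h1] at *
    rw [chainVert_succ f L (L.length - 1 - k) (by omega)]
    have h2 : L.length - (k + 1) = L.length - 1 - k := by omega
    rw [h2]
    group

lemma hatd_mem_flipRev {l : Λ} {f g : G} (L : List (RelLab X H × Bool))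
    (h1 : f * (L.map edgeVal).prod = g)
    (h2 : ∀ i : ℕ, ∀ e ∈ L[i]?, ¬(chainVert f L i ∈ H l ∧ (Prod.fst e).isH l)) :
    g * ((flipRev L).map edgeVal).prod = f ∧
    (∀ i : ℕ, ∀ e ∈ (flipRev L)[i]?,
      ¬(chainVert g (flipRev L) i ∈ H l ∧ (Prod.fst e).isH l)) := by
  constructor
  · rw [flipRev_prod, ← h1]; group
  · intro i e he
    rintro ⟨hcv, hisH⟩
    have hi : i < (flipRev L).length := by
      by_contra hcon
      rw [List.getElem?_eq_none (le_of_not_gt hcon)] at he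
      exact absurd he (by simp)
    have hiL : i < L.length := by rwa [flipRev_length] at hi
    have hee : e = (flipRev L)[i] := by
      have : (flipRev L)[i]? = some ((flipRev L)[i]) := List.getElem?_eq_getElem hi
      rw [this] at he; exact (Option.some_inj.mp he).symm
    set k := L.length - 1 - i with hk
    have hkL : k < L.length := by omega
    have hget : (flipRev L)[i] = eflip (L[k]) := by
      simp [flipRev, List.getElem_reverse, hk]
    have hisH' : (L[k]).1.isH l := by
      rw [hee, hget] at hisH; exact hisH
    have hcv' : chainVert f L (k + 1) ∈ H l := by
      have := chainVert_flipRev L h1 i (le_of_lt hiL)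
      rw [this] at hcv
      have : L.length - i = k + 1 := by omega
      rwa [this] at hcv
    have hcvk : chainVert f L k ∈ H l := by
      rw [chainVert_succ f L k hkL] at hcv'
      have hmem : edgeVal (L[k]) ∈ H l := isH_edgeVal_mem hisH'
      have := mul_mem hcv' (inv_mem hmem)
      simpa using this
    exact h2 k (L[k]) (List.getElem?_eq_getElem hkL) ⟨hcvk, hisH'⟩

lemma hatd_comm (l : Λ) (f g : G) : hatd X H l f g = hatd X H l g f := by
  unfold hatd
  congr 1
  ext r
  constructor <;> rintro ⟨L, h1, h2, rfl⟩ <;>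
    exact ⟨flipRev L, (hatd_mem_flipRev L h1 h2).1, (hatd_mem_flipRev L h1 h2).2,
      by rw [flipRev_length]⟩

lemma hatd_self (l : Λ) (f : G) : hatd X H l f f = 0 := by
  apply le_antisymm _ zero_le
  apply sInf_le
  exact ⟨[], by simp, by simp, by simp⟩

lemma exists_chain (hgen : Subgroup.closure (X ∪ ⋃ l : Λ, (H l : Set G)) = ⊤) (g : G) :
    ∃ L : List (RelLab X H × Bool), (L.map edgeVal).prod = g := by
  have hg : g ∈ Subgroup.closure (X ∪ ⋃ l : Λ, (H l : Set G)) := by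
    rw [hgen]; trivial
  induction hg using Subgroup.closure_induction with
  | mem x hx =>
    rcases hx with hx | hx
    · exact ⟨[((RelLab.xlab x hx : RelLab X H), true)], by simp [edgeVal, RelLab.val]⟩
    · obtain ⟨s, ⟨l, rfl⟩, hxl⟩ := hx
      by_cases hx1 : x = 1
      · exact ⟨[], by simp [hx1]⟩
      · exact ⟨[((RelLab.hlab l x hxl hx1 : RelLab X H), true)], by simp [edgeVal, RelLab.val]⟩
  | one => exact ⟨[], by simp⟩
  | mul x y _ _ ihx ihy =>
    obtain ⟨L1, h1⟩ := ihx; obtain ⟨L2, h2⟩ := ihy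
    exact ⟨L1 ++ L2, by simp [h1, h2]⟩
  | inv x _ ihx =>
    obtain ⟨L, h⟩ := ihx
    exact ⟨flipRev L, by rw [flipRev_prod, h]⟩

lemma rdist_min (hgen : Subgroup.closure (X ∪ ⋃ l : Λ, (H l : Set G)) = ⊤) (f g : G) :
    ∃ L : List (RelLab X H × Bool), f * (L.map edgeVal).prod = g ∧
      rdist X H f g = (L.length : ℝ) := by
  obtain ⟨L0, hL0⟩ := exists_chain hgen (f⁻¹ * g)
  have hL0' : f * (L0.map edgeVal).prod = g := by rw [hL0]; group
  have hS : {n : ℕ | ∃ L : List (RelLab X H × Bool),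
      f * (L.map edgeVal).prod = g ∧ L.length = n}.Nonempty := ⟨L0.length, L0, hL0', rfl⟩
  obtain ⟨L, hL, hlen⟩ := Nat.sInf_mem hS
  refine ⟨L, hL, le_antisymm (rdist_le_length L hL) ?_⟩
  refine le_csInf ⟨(L.length : ℝ), ⟨L, hL, rfl⟩⟩ ?_
  rintro r ⟨L', h', rfl⟩
  have h2 : L.length ≤ L'.length := by
    rw [hlen]
    exact Nat.sInf_le ⟨L', h', rfl⟩
  exact_mod_cast h2

lemma rdist_triangle (hgen : Subgroup.closure (X ∪ ⋃ l : Λ, (H l : Set G)) = ⊤)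
    (f g h : G) : rdist X H f h ≤ rdist X H f g + rdist X H g h := by
  obtain ⟨L1, h1, e1⟩ := rdist_min hgen f g
  obtain ⟨L2, h2, e2⟩ := rdist_min hgen g h
  have : f * (((L1 ++ L2).map edgeVal)).prod = h := by
    rw [List.map_append, List.prod_append, ← mul_assoc, h1, h2]
  have := rdist_le_length (L1 ++ L2) this
  rw [e1, e2]
  simpa using this


variable {p : RPath X H}

lemma cast_lt_len {i j : ℕ} (hij : i < j) (hj : (j : ℕ∞) ≤ p.len) : (i : ℕ∞) < p.len :=
  lt_of_lt_of_le (by exact_mod_cast hij) hj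

lemma pen_mem {l : Λ} {B : Set G} {i j : ℕ} (hB : Coset H l B)
    (hpen : p.PenetratesAt l B i j) : ∀ k, i ≤ k → k ≤ j → p.vert k ∈ B := by
  intro k hik hkj
  induction k, hik using Nat.le_induction with
  | base => exact hpen.2.2.1
  | succ k hk ih =>
    have hkj' : k < j := hkj
    have hstep := p.step k (cast_lt_len hkj' hpen.2.1)
    have hlab := hpen.2.2.2.1 k hk hkj'
    have hmem : edgeVal (p.lab k) ∈ H l := isH_edgeVal_mem hlab
    refine hB.mul_mem' (ih (le_of_lt hkj')) ?_
    rw [hstep]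
    simpa using hmem

lemma geo_coset {l : Λ} {B : Set G} {u v : ℕ} (hp : p.IsGeodesic) (hB : Coset H l B)
    (hu : p.vert u ∈ B) (hv : p.vert v ∈ B) (huv : u ≤ v) (hlen : (v : ℕ∞) ≤ p.len) :
    v ≤ u + 1 := by
  have h1 := hp u v huv hlen
  have h2 := rdist_le_one (X := X) hB hu hv
  rw [h1] at h2
  have : v - u ≤ 1 := by exact_mod_cast h2
  omega

lemma pen_order (hgen : Subgroup.closure (X ∪ ⋃ l : Λ, (H l : Set G)) = ⊤)
    {l₀ l₁ : Λ} {B₀ B₁ : Set G} (hp : p.IsGeodesic)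
    (hB₀ : Coset H l₀ B₀) (hB₁ : Coset H l₁ B₁)
    (hne : (⟨l₀, B₀⟩ : Λ × Set G) ≠ ⟨l₁, B₁⟩)
    {i₀ j₀ i₁ j₁ : ℕ}
    (h₀ : p.PenetratesAt l₀ B₀ i₀ j₀) (h₁ : p.PenetratesAt l₁ B₁ i₁ j₁)
    (hord : rdistPtSet X H (p.vert 0) B₀ < rdistPtSet X H (p.vert 0) B₁) :
    j₀ ≤ i₁ := by
  obtain ⟨hij₀, hlen₀, hmem₀, hlab₀, hent₀, _⟩ := h₀
  obtain ⟨hij₁, hlen₁, hmem₁, hlab₁, hent₁, _⟩ := h₁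
  have hdisj : j₀ ≤ i₁ ∨ j₁ ≤ i₀ := by
    by_contra hc
    push_neg at hc
    obtain ⟨hc₀, hc₁⟩ := hc
    have hk₀ : (p.lab (max i₀ i₁)).1.isH l₀ := hlab₀ _ (le_max_left _ _)
      (max_lt hij₀ hc₀)
    have hk₁ : (p.lab (max i₀ i₁)).1.isH l₁ := hlab₁ _ (le_max_right _ _)
      (max_lt hc₁ hij₁)
    have hll : l₀ = l₁ := isH_unique hk₀ hk₁
    rcases lt_trichotomy i₀ i₁ with h | h | h
    · rcases hent₁ with h1 | h1
      · omega
      · exact h1 (hll ▸ hlab₀ (i₁ - 1) (by omega) (by omega))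
    · apply hne
      have : B₀ = B₁ := Coset.eq_of_mem hB₀ (hll ▸ hB₁) hmem₀ (h ▸ hmem₁)
      rw [hll, this]
    · rcases hent₀ with h1 | h1
      · omega
      · exact h1 (hll ▸ hlab₁ (i₀ - 1) (by omega) (by omega))
  rcases hdisj with h | h
  · exact h
  · exfalso
    have hi₁len : (i₁ : ℕ∞) ≤ p.len := le_trans (by exact_mod_cast le_of_lt hij₁) hlen₁
    have hi₀len : (i₀ : ℕ∞) ≤ p.len := le_trans (by exact_mod_cast le_of_lt hij₀) hlen₀
    have hD₁le : rdistPtSet X H (p.vert 0) B₁ ≤ (i₁ : ℝ) := by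
      apply csInf_le ⟨0, by rintro r ⟨b, hb, rfl⟩; exact rdist_nonneg⟩
      refine ⟨p.vert i₁, hmem₁, ?_⟩
      rw [hp 0 i₁ (Nat.zero_le _) hi₁len]
      simp
    have hD₀ge : (i₀ : ℝ) - 1 ≤ rdistPtSet X H (p.vert 0) B₀ := by
      refine le_csInf ⟨rdist X H (p.vert 0) (p.vert i₀), ⟨p.vert i₀, hmem₀, rfl⟩⟩ ?_
      rintro r ⟨b, hb, rfl⟩
      have ht := rdist_triangle hgen (p.vert 0) b (p.vert i₀)
      have h1 : rdist X H b (p.vert i₀) ≤ 1 := rdist_le_one hB₀ hb hmem₀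
      have h2 := hp 0 i₀ (Nat.zero_le _) hi₀len
      rw [h2] at ht
      simp only [Nat.sub_zero] at ht
      linarith
    have : (i₁ : ℝ) + 1 ≤ (i₀ : ℝ) := by exact_mod_cast show i₁ + 1 ≤ i₀ by omega
    linarith

def quadVert (p q : RPath X H) (a v s₁ s₂ s₃ : ℕ) : ℕ → G := fun k =>
  if k ≤ s₁ then p.vert (a + k)
  else if k ≤ s₁ + s₂ + s₃ then q.vert (v - (k - s₁ - s₂))
  else p.vert a

def quadLab (p q : RPath X H) (a v s₁ s₂ s₃ : ℕ) (e₁ e₀ : RelLab X H × Bool) :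
    ℕ → RelLab X H × Bool := fun k =>
  if k < s₁ then p.lab (a + k)
  else if k < s₁ + s₂ then e₁
  else if k < s₁ + s₂ + s₃ then eflip (q.lab (v - 1 - (k - s₁ - s₂)))
  else e₀

def quadCorner (s₁ s₂ s₃ n : ℕ) : ℕ → ℕ
  | 0 => 0
  | 1 => s₁
  | 2 => s₁ + s₂
  | 3 => s₁ + s₂ + s₃
  | _ => n

lemma quadVert_low {p q : RPath X H} {a v s₁ s₂ s₃ k : ℕ} (hk : k ≤ s₁) :
    quadVert p q a v s₁ s₂ s₃ k = p.vert (a + k) := if_pos hk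

lemma quadVert_mid {p q : RPath X H} {a v s₁ s₂ s₃ k : ℕ} (h1 : s₁ + s₂ ≤ k)
    (h2 : k ≤ s₁ + s₂ + s₃) (hbv : s₂ = 0 → p.vert (a + s₁) = q.vert v) :
    quadVert p q a v s₁ s₂ s₃ k = q.vert (v - (k - s₁ - s₂)) := by
  unfold quadVert
  by_cases hk : k ≤ s₁
  · have hs2 : s₂ = 0 := by omega
    have hkk : k = s₁ := by omega
    rw [if_pos hk, hkk, hbv hs2]
    congr 1
    omega
  · rw [if_neg hk, if_pos h2]

lemma quadVert_high {p q : RPath X H} {a v s₁ s₂ s₃ k : ℕ} (hk : s₁ + s₂ + s₃ < k) :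
    quadVert p q a v s₁ s₂ s₃ k = p.vert a := by
  unfold quadVert
  rw [if_neg (by omega), if_neg (by omega)]

lemma quadLab_one {p q : RPath X H} {a v s₁ s₂ s₃ k : ℕ} {e₁ e₀ : RelLab X H × Bool}
    (hk : k < s₁) : quadLab p q a v s₁ s₂ s₃ e₁ e₀ k = p.lab (a + k) := if_pos hk

lemma quadLab_two {p q : RPath X H} {a v s₁ s₂ s₃ k : ℕ} {e₁ e₀ : RelLab X H × Bool}
    (h1 : s₁ ≤ k) (h2 : k < s₁ + s₂) : quadLab p q a v s₁ s₂ s₃ e₁ e₀ k = e₁ := by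
  unfold quadLab
  rw [if_neg (by omega), if_pos h2]

lemma quadLab_three {p q : RPath X H} {a v s₁ s₂ s₃ k : ℕ} {e₁ e₀ : RelLab X H × Bool}
    (h1 : s₁ + s₂ ≤ k) (h2 : k < s₁ + s₂ + s₃) :
    quadLab p q a v s₁ s₂ s₃ e₁ e₀ k = eflip (q.lab (v - 1 - (k - s₁ - s₂))) := by
  unfold quadLab
  rw [if_neg (by omega), if_neg (by omega), if_pos h2]

lemma quadLab_four {p q : RPath X H} {a v s₁ s₂ s₃ k : ℕ} {e₁ e₀ : RelLab X H × Bool}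
    (hk : s₁ + s₂ + s₃ ≤ k) : quadLab p q a v s₁ s₂ s₃ e₁ e₀ k = e₀ := by
  unfold quadLab
  rw [if_neg (by omega), if_neg (by omega), if_neg (by omega)]

lemma Coset.mem_of_mul_mem {l : Λ} {B : Set G} (hB : Coset H l B) {y h : G}
    (hyh : y * h ∈ B) (hh : h ∈ H l) : y ∈ B := by
  refine hB.mul_mem' hyh ?_
  have : (y * h)⁻¹ * y = h⁻¹ * (y⁻¹ * y) := by group
  rw [this]
  simpa using inv_mem hh

lemma master (hgen : Subgroup.closure (X ∪ ⋃ l : Λ, (H l : Set G)) = ⊤)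
    {Cc : ℝ} (hCB : CBound X H Cc)
    {l₀ l₁ : Λ} {B₀ B₁ : Set G} (hB₀ : Coset H l₀ B₀) (hB₁ : Coset H l₁ B₁)
    (hne : (⟨l₀, B₀⟩ : Λ × Set G) ≠ ⟨l₁, B₁⟩)
    {p q : RPath X H} (hp : p.IsGeodesic) (hq : q.IsGeodesic)
    {ip₀ jp₀ ip₁ jp₁ iq₀ jq₀ iq₁ jq₁ : ℕ}
    (hpB₀ : p.PenetratesAt l₀ B₀ ip₀ jp₀) (hpB₁ : p.PenetratesAt l₁ B₁ ip₁ jp₁)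
    (hqB₀ : q.PenetratesAt l₀ B₀ iq₀ jq₀) (hqB₁ : q.PenetratesAt l₁ B₁ iq₁ jq₁)
    (hpo : jp₀ ≤ ip₁) (hqo : jq₀ ≤ iq₁) :
    hatd X H l₀ (q.vert jq₀) (p.vert jp₀) ≤ ENNReal.ofReal (4 * Cc) ∧
    hatd X H l₁ (p.vert ip₁) (q.vert iq₁) ≤ ENNReal.ofReal (4 * Cc) := by
  classical
  have hA : p.vert jp₀ ∈ B₀ := pen_mem hB₀ hpB₀ jp₀ hpB₀.1.le le_rfl
  have hBmem : p.vert ip₁ ∈ B₁ := hpB₁.2.2.1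
  have hAq : q.vert jq₀ ∈ B₀ := pen_mem hB₀ hqB₀ jq₀ hqB₀.1.le le_rfl
  have hBq : q.vert iq₁ ∈ B₁ := hqB₁.2.2.1
  have hll_ne : ∀ z : G, z ∈ B₀ → z ∈ B₁ → l₀ ≠ l₁ := by
    intro z h0 h1 hll
    have hBB : B₀ = B₁ := Coset.eq_of_mem hB₀ (hll ▸ hB₁) h0 h1
    exact hne (by rw [hll, hBB])
  have hip₁jp₁ : ip₁ < jp₁ := hpB₁.1
  have hiq₁jq₁ : iq₁ < jq₁ := hqB₁.1
  have hplen : (jp₁ : ℕ∞) ≤ p.len := hpB₁.2.1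
  have hqlen : (jq₁ : ℕ∞) ≤ q.len := hqB₁.2.1
  have hpk : ∀ k : ℕ, k < jp₁ → (k : ℕ∞) < p.len := fun k hk =>
    lt_of_lt_of_le (by exact_mod_cast hk) hplen
  have hpk' : ∀ k : ℕ, k ≤ ip₁ → (k : ℕ∞) ≤ p.len := fun k hk => (hpk k (by omega)).le
  have hqk : ∀ k : ℕ, k < jq₁ → (k : ℕ∞) < q.len := fun k hk =>
    lt_of_lt_of_le (by exact_mod_cast hk) hqlen
  have hqk' : ∀ k : ℕ, k ≤ iq₁ → (k : ℕ∞) ≤ q.len := fun k hk => (hqk k (by omega)).le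
  have hexitp : ¬ (p.lab jp₀).1.isH l₀ := by
    rcases hpB₀.2.2.2.2.2 with h | h
    · exact absurd h (ne_of_lt (hpk jp₀ (by omega)))
    · exact h
  have hexitq : ¬ (q.lab jq₀).1.isH l₀ := by
    rcases hqB₀.2.2.2.2.2 with h | h
    · exact absurd h (ne_of_lt (hqk jq₀ (by omega)))
    · exact h
  have hentp : 1 ≤ ip₁ → ¬ (p.lab (ip₁ - 1)).1.isH l₁ := by
    intro h1
    rcases hpB₁.2.2.2.2.1 with h | h
    · omega
    · exact h
  have hentq : 1 ≤ iq₁ → ¬ (q.lab (iq₁ - 1)).1.isH l₁ := by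
    intro h1
    rcases hqB₁.2.2.2.2.1 with h | h
    · omega
    · exact h
  set s₁ := ip₁ - jp₀ with hs₁def
  set s₃ := iq₁ - jq₀ with hs₃def
  have hs₁ : jp₀ + s₁ = ip₁ := by omega
  have hs₃ : jq₀ + s₃ = iq₁ := by omega
  have hmem₁ : (p.vert ip₁)⁻¹ * q.vert iq₁ ∈ H l₁ := hB₁.sub_mem hBmem hBq
  have hmem₀ : (q.vert jq₀)⁻¹ * p.vert jp₀ ∈ H l₀ := hB₀.sub_mem hAq hA
  set s₂ := if (p.vert ip₁)⁻¹ * q.vert iq₁ = 1 then 0 else 1 with hs₂def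
  set s₄ := if (q.vert jq₀)⁻¹ * p.vert jp₀ = 1 then 0 else 1 with hs₄def
  set e₁ : RelLab X H × Bool :=
    if h : (p.vert ip₁)⁻¹ * q.vert iq₁ = 1 then p.lab 0
    else (RelLab.hlab l₁ _ hmem₁ h, true) with he₁def
  set e₀ : RelLab X H × Bool :=
    if h : (q.vert jq₀)⁻¹ * p.vert jp₀ = 1 then p.lab 0
    else (RelLab.hlab l₀ _ hmem₀ h, true) with he₀def
  set n := s₁ + s₂ + s₃ + s₄ with hndef
  have hs₂01 : s₂ = 0 ∨ s₂ = 1 := by rw [hs₂def]; split <;> simp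
  have hs₄01 : s₄ = 0 ∨ s₄ = 1 := by rw [hs₄def]; split <;> simp
  have hs₂0 : s₂ = 0 → p.vert ip₁ = q.vert iq₁ := by
    intro h
    rw [hs₂def] at h
    by_cases hc : (p.vert ip₁)⁻¹ * q.vert iq₁ = 1
    · exact inv_mul_eq_one.mp hc
    · rw [if_neg hc] at h; exact absurd h one_ne_zero
  have hs₂1 : s₂ = 1 → (p.vert ip₁)⁻¹ * q.vert iq₁ ≠ 1 := by
    intro h hc
    rw [hs₂def, if_pos hc] at h; exact absurd h.symm one_ne_zero
  have hs₄0 : s₄ = 0 → q.vert jq₀ = p.vert jp₀ := by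
    intro h
    rw [hs₄def] at h
    by_cases hc : (q.vert jq₀)⁻¹ * p.vert jp₀ = 1
    · exact inv_mul_eq_one.mp hc
    · rw [if_neg hc] at h; exact absurd h one_ne_zero
  have hs₄1 : s₄ = 1 → (q.vert jq₀)⁻¹ * p.vert jp₀ ≠ 1 := by
    intro h hc
    rw [hs₄def, if_pos hc] at h; exact absurd h.symm one_ne_zero
  set Vt := quadVert p q jp₀ iq₁ s₁ s₂ s₃ with hVtdef
  set Lb := quadLab p q jp₀ iq₁ s₁ s₂ s₃ e₁ e₀ with hLbdef
  have hbv : s₂ = 0 → p.vert (jp₀ + s₁) = q.vert iq₁ := fun h => by rw [hs₁]; exact hs₂0 h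
  have hVt1 : ∀ k, k ≤ s₁ → Vt k = p.vert (jp₀ + k) := fun k hk => quadVert_low hk
  have hVt2 : ∀ k, s₁ + s₂ ≤ k → k ≤ s₁ + s₂ + s₃ → Vt k = q.vert (iq₁ - (k - s₁ - s₂)) :=
    fun k h1 h2 => quadVert_mid h1 h2 hbv
  have hVt0 : Vt 0 = p.vert jp₀ := by rw [hVt1 0 (by omega), Nat.add_zero]
  have hVts₁ : Vt s₁ = p.vert ip₁ := by rw [hVt1 s₁ le_rfl, hs₁]
  have hVtmid : Vt (s₁ + s₂) = q.vert iq₁ := by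
    rw [hVt2 _ le_rfl (by omega)]; congr 1; omega
  have hVtq : Vt (s₁ + s₂ + s₃) = q.vert jq₀ := by
    rw [hVt2 _ (by omega) le_rfl]; congr 1; omega
  have hVtn : Vt n = p.vert jp₀ := by
    rcases hs₄01 with h4 | h4
    · have hnn : n = s₁ + s₂ + s₃ := by omega
      rw [hnn, hVtq, hs₄0 h4]
    · have hnn : s₁ + s₂ + s₃ < n := by omega
      rw [hVtdef]; exact quadVert_high hnn
  have hstep : ∀ k, k < n → Vt (k + 1) = Vt k * edgeVal (Lb k) := by
    intro k hk
    rcases lt_or_ge k s₁ with h1 | h1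
    · rw [hVt1 k h1.le, hVt1 (k+1) h1, hLbdef, quadLab_one h1]
      have hs := p.step (jp₀ + k) (hpk _ (by omega))
      rw [show jp₀ + (k+1) = (jp₀ + k) + 1 by omega]
      exact hs
    · rcases lt_or_ge k (s₁ + s₂) with h2 | h2
      · have hs2 : s₂ = 1 := by omega
        have hkk : k = s₁ := by omega
        subst hkk
        have hc := hs₂1 hs2
        rw [hVts₁, show s₁ + 1 = s₁ + s₂ by omega, hVtmid, hLbdef, quadLab_two le_rfl h2,
          he₁def, dif_neg hc]
        simp [edgeVal, RelLab.val]
      · rcases lt_or_ge k (s₁ + s₂ + s₃) with h3 | h3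
        · set m := iq₁ - 1 - (k - s₁ - s₂) with hmdef
          have hm1 : m + 1 = iq₁ - (k - s₁ - s₂) := by omega
          have hm2 : m = iq₁ - (k + 1 - s₁ - s₂) := by omega
          have hmlt : m < jq₁ := by omega
          rw [hVt2 k h2 h3.le, hVt2 (k+1) (by omega) h3, hLbdef, quadLab_three h2 h3,
            ← hmdef, ← hm1, ← hm2, edgeVal_eflip]
          rw [q.step m (hqk m hmlt)]
          group
        · have hs4 : s₄ = 1 := by omega
          have hkk : k = s₁ + s₂ + s₃ := by omega
          subst hkk
          have hc := hs₄1 hs4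
          rw [hVtq, show s₁ + s₂ + s₃ + 1 = n by omega, hVtn, hLbdef, quadLab_four le_rfl,
            he₀def, dif_neg hc]
          simp [edgeVal, RelLab.val]
  have hclosed : Vt n = Vt 0 := by rw [hVtn, hVt0]
  have hmono : ∀ t, t < 4 → quadCorner s₁ s₂ s₃ n t ≤ quadCorner s₁ s₂ s₃ n (t+1) := by
    intro t ht
    interval_cases t <;> simp [quadCorner] <;> omega
  have hsides : ∀ t : ℕ, t < 4 → ∀ i j : ℕ, quadCorner s₁ s₂ s₃ n t ≤ i → i ≤ j →
      j ≤ quadCorner s₁ s₂ s₃ n (t+1) → rdist X H (Vt i) (Vt j) = ((j - i : ℕ) : ℝ) := by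
    intro t ht i j hi hij hj
    interval_cases t
    · simp only [quadCorner] at hi hj
      norm_num at hi hj
      rw [hVt1 i (by omega), hVt1 j hj]
      rw [hp (jp₀ + i) (jp₀ + j) (by omega) (hpk' _ (by omega))]
      congr 1
      omega
    · simp only [quadCorner] at hi hj
      norm_num at hi hj
      rcases eq_or_lt_of_le hij with rfl | hlt
      · simp [rdist_self]
      · have h2 : s₂ = 1 := by omega
        have hii : i = s₁ := by omega
        have hjj : j = s₁ + 1 := by omega
        subst hii; subst hjj
        rw [hVts₁, show s₁ + 1 = s₁ + s₂ by omega, hVtmid]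
        have hne' : p.vert ip₁ ≠ q.vert iq₁ := fun hcon => (hs₂1 h2) (by rw [hcon]; group)
        rw [rdist_eq_one hB₁ hBmem hBq hne']
        rw [h2]; simp
    · simp only [quadCorner] at hi hj
      norm_num at hi hj
      rw [hVt2 i hi (by omega), hVt2 j (by omega) hj]
      rw [rdist_comm]
      rw [hq (iq₁ - (j - s₁ - s₂)) (iq₁ - (i - s₁ - s₂)) (by omega) (hqk' _ (by omega))]
      congr 1
      omega
    · simp only [quadCorner] at hi hj
      norm_num at hi hj
      rcases eq_or_lt_of_le hij with rfl | hlt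
      · simp [rdist_self]
      · have h4 : s₄ = 1 := by omega
        have hii : i = s₁ + s₂ + s₃ := by omega
        have hjj : j = n := by omega
        subst hii; subst hjj
        rw [hVtq, hVtn]
        have hne' : q.vert jq₀ ≠ p.vert jp₀ := fun hcon => (hs₄1 h4) (by rw [hcon]; group)
        rw [rdist_eq_one hB₀ hAq hA hne']
        have hh : n - (s₁ + s₂ + s₃) = 1 := by omega
        rw [hh]; simp
  obtain ⟨P, hPn, hPm, hPv, hPl⟩ : ∃ P : RPolygon X H, P.n = n ∧ P.m = 4 ∧ P.vert = Vt ∧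
      P.lab = Lb :=
    ⟨⟨n, 4, Vt, Lb, hstep, hclosed, quadCorner s₁ s₂ s₃ n, rfl, by norm_num [quadCorner],
      hmono, hsides⟩, rfl, rfl, rfl, rfl⟩
  constructor
  · -- the `l₀` bound, via the component `e₀`
    by_cases hd : (q.vert jq₀)⁻¹ * p.vert jp₀ = 1
    · rw [inv_mul_eq_one.mp hd, hatd_self]
      exact zero_le
    · have hs4 : s₄ = 1 := by rw [hs₄def, if_neg hd]
      have hcomp : P.CompAt l₀ (s₁+s₂+s₃) (s₁+s₂+s₃+1) := by
        unfold RPolygon.CompAt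
        rw [hPn, hPl, hLbdef]
        refine ⟨by omega, by omega, by omega, ?_, ?_⟩
        · intro k hk1 hk2
          have hkk : k = s₁+s₂+s₃ := by omega
          subst hkk
          rw [Nat.mod_eq_of_lt (by omega), quadLab_four le_rfl, he₀def, dif_neg hd]
          exact rfl
        · rcases (by omega : n = 1 ∨ 2 ≤ n) with hn1 | hn2
          · left; omega
          · right
            constructor
            · have hmod : (s₁+s₂+s₃ + n - 1) % n = s₁+s₂+s₃ - 1 := by
                rw [show s₁+s₂+s₃+n-1 = (s₁+s₂+s₃-1)+n by omega, Nat.add_mod_right]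
                exact Nat.mod_eq_of_lt (by omega)
              rw [hmod]
              rcases Nat.eq_zero_or_pos s₃ with h30 | h30
              · rcases hs₂01 with h20 | h21
                · have hs1pos : 1 ≤ s₁ := by omega
                  rw [show s₁+s₂+s₃-1 = s₁-1 by omega, quadLab_one (by omega)]
                  intro hisH
                  have hBinB₀ : p.vert ip₁ ∈ B₀ := by
                    rw [hs₂0 h20, show iq₁ = jq₀ by omega]; exact hAq
                  have hgc := geo_coset hp hB₀ hA hBinB₀ hpo (hpk' ip₁ le_rfl)
                  apply hexitp
                  rwa [show jp₀ + (s₁-1) = jp₀ by omega] at hisH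
                · rw [show s₁+s₂+s₃-1 = s₁ by omega, quadLab_two le_rfl (by omega),
                    he₁def, dif_neg (hs₂1 h21)]
                  intro hisH
                  exact hll_ne (q.vert iq₁) (by rw [show iq₁ = jq₀ by omega]; exact hAq)
                    hBq (show l₁ = l₀ from hisH).symm
              · rw [quadLab_three (by omega) (by omega),
                  show iq₁ - 1 - (s₁+s₂+s₃-1 - s₁ - s₂) = jq₀ by omega]
                exact fun hisH => hexitq hisH
            · rw [show s₁+s₂+s₃+1 = n by omega, Nat.mod_self]
              rcases Nat.eq_zero_or_pos s₁ with h10 | h10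
              · rcases hs₂01 with h20 | h21
                · have h3pos : 1 ≤ s₃ := by omega
                  rw [quadLab_three (by omega) (by omega),
                    show iq₁ - 1 - (0 - s₁ - s₂) = iq₁ - 1 by omega]
                  intro hisH
                  have hqiq : q.vert iq₁ ∈ B₀ := by
                    rw [← hs₂0 h20, show ip₁ = jp₀ by omega]; exact hA
                  have hgc := geo_coset hq hB₀ hAq hqiq hqo (hqk' iq₁ le_rfl)
                  apply hexitq
                  rwa [show iq₁ - 1 = jq₀ by omega] at hisH
                · rw [quadLab_two (by omega) (by omega), he₁def, dif_neg (hs₂1 h21)]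
                  intro hisH
                  exact hll_ne (p.vert ip₁) (by rw [show ip₁ = jp₀ by omega]; exact hA)
                    hBmem (show l₁ = l₀ from hisH).symm
              · rw [quadLab_one h10]
                rwa [show jp₀ + 0 = jp₀ by omega]
      have hiso : P.IsolatedAt l₀ (s₁+s₂+s₃) (s₁+s₂+s₃+1) := by
        unfold RPolygon.IsolatedAt
        refine ⟨hcomp, ?_⟩
        intro i' j' hcomp' hne' hmem'
        unfold RPolygon.CompAt at hcomp'
        rw [hPn, hPl] at hcomp'
        rw [hPn] at hne'
        rw [hPn, hPv] at hmem'
        obtain ⟨hij', hi'n, hj'n, hlab', -⟩ := hcomp'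
        rw [Nat.mod_eq_of_lt (show s₁+s₂+s₃ < n by omega), Nat.mod_eq_of_lt hi'n] at hne' hmem'
        have hfirst : (Lb i').1.isH l₀ := by
          have hx := hlab' i' le_rfl hij'
          rwa [Nat.mod_eq_of_lt hi'n] at hx
        rw [hVtq] at hmem'
        have hVi' : Vt i' ∈ B₀ := hB₀.mul_mem' hAq hmem'
        rcases lt_or_ge i' s₁ with h1 | h1
        · have hlabp : (p.lab (jp₀+i')).1.isH l₀ := by
            rwa [hLbdef, quadLab_one h1] at hfirst
          have hpv : p.vert (jp₀+i') ∈ B₀ := by rwa [hVt1 i' h1.le] at hVi'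
          have hpv1 : p.vert (jp₀+i'+1) ∈ B₀ := by
            refine hB₀.mul_mem' hpv ?_
            rw [p.step (jp₀+i') (hpk _ (by omega))]
            simpa using isH_edgeVal_mem hlabp
          have hgc := geo_coset hp hB₀ hA hpv1 (by omega) (hpk' (jp₀+i'+1) (by omega))
          have hi0 : i' = 0 := by omega
          subst hi0
          apply hexitp
          rwa [show jp₀ + 0 = jp₀ by omega] at hlabp
        · rcases lt_or_ge i' (s₁+s₂) with h2 | h2
          · have hs2 : s₂ = 1 := by omega
            have hii : i' = s₁ := by omega
            subst hii
            rw [hLbdef, quadLab_two le_rfl h2, he₁def, dif_neg (hs₂1 hs2)] at hfirst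
            exact hll_ne (p.vert ip₁) (by rwa [hVts₁] at hVi') hBmem
              (show l₁ = l₀ from hfirst).symm
          · rcases lt_or_ge i' (s₁+s₂+s₃) with h3 | h3
            · set m := iq₁ - 1 - (i' - s₁ - s₂) with hmdef
              have hm1 : m + 1 = iq₁ - (i' - s₁ - s₂) := by omega
              have hlabq : (q.lab m).1.isH l₀ := by
                rw [hLbdef, quadLab_three h2 h3, ← hmdef] at hfirst
                exact hfirst
              have hqv1 : q.vert (m+1) ∈ B₀ := by
                rw [hVt2 i' h2 h3.le, ← hm1] at hVi'
                exact hVi'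
              have hgc := geo_coset hq hB₀ hAq hqv1 (by omega) (hqk' (m+1) (by omega))
              have hmjq : m = jq₀ := by omega
              apply hexitq
              rwa [hmjq] at hlabq
            · have hii : i' = s₁+s₂+s₃ := by omega
              exact hne' hii
      have hkey := hCB P l₀ (s₁+s₂+s₃) (s₁+s₂+s₃+1) hiso
      rw [hPv, hPn, hPm] at hkey
      rw [Nat.mod_eq_of_lt (by omega), show s₁+s₂+s₃+1 = n by omega, Nat.mod_self,
        hVtq, hVt0] at hkey
      convert hkey using 2 <;> norm_num
  · -- the `l₁` bound, via the component `e₁`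
    by_cases hd : (p.vert ip₁)⁻¹ * q.vert iq₁ = 1
    · rw [inv_mul_eq_one.mp hd, hatd_self]
      exact zero_le
    · have hs2 : s₂ = 1 := by rw [hs₂def, if_neg hd]
      have hcomp : P.CompAt l₁ s₁ (s₁+1) := by
        unfold RPolygon.CompAt
        rw [hPn, hPl, hLbdef]
        refine ⟨by omega, by omega, by omega, ?_, ?_⟩
        · intro k hk1 hk2
          have hkk : k = s₁ := by omega
          subst hkk
          rw [Nat.mod_eq_of_lt (by omega), quadLab_two le_rfl (by omega), he₁def, dif_neg hd]
          exact rfl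
        · rcases (by omega : n = 1 ∨ 2 ≤ n) with hn1 | hn2
          · left; omega
          · right
            constructor
            · have hmod : (s₁ + n - 1) % n = (s₁ + n - 1) % n := rfl
              rcases Nat.eq_zero_or_pos s₁ with h10 | h10
              · rw [show (s₁ + n - 1) % n = n - 1 by
                  rw [show s₁ + n - 1 = n - 1 by omega]; exact Nat.mod_eq_of_lt (by omega)]
                rcases hs₄01 with h40 | h41
                · have h3pos : 1 ≤ s₃ := by omega
                  rw [show n - 1 = s₁ + s₂ + (s₃ - 1) by omega,
                    quadLab_three (by omega) (by omega),
                    show iq₁ - 1 - (s₁ + s₂ + (s₃-1) - s₁ - s₂) = jq₀ by omega]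
                  intro hisH
                  have hqjq : q.vert jq₀ ∈ B₁ := by
                    rw [hs₄0 h40, show jp₀ = ip₁ by omega]; exact hBmem
                  have hgc := geo_coset hq hB₁ hqjq hBq hqo (hqk' iq₁ le_rfl)
                  apply hentq (by omega)
                  rwa [show iq₁ - 1 = jq₀ by omega]
                · rw [show n - 1 = s₁ + s₂ + s₃ by omega, quadLab_four le_rfl,
                    he₀def, dif_neg (hs₄1 h41)]
                  intro hisH
                  exact hll_ne (p.vert jp₀) hA (by rw [show jp₀ = ip₁ by omega]; exact hBmem)
                    (show l₀ = l₁ from hisH)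
              · rw [show (s₁ + n - 1) % n = s₁ - 1 by
                  rw [show s₁ + n - 1 = (s₁ - 1) + n by omega, Nat.add_mod_right]
                  exact Nat.mod_eq_of_lt (by omega)]
                rw [quadLab_one (by omega)]
                have hhh := hentp (by omega)
                rwa [show ip₁ - 1 = jp₀ + (s₁ - 1) by omega] at hhh
            · rcases lt_or_ge (s₁+1) n with hlt | hge
              · rw [Nat.mod_eq_of_lt hlt]
                rcases Nat.eq_zero_or_pos s₃ with h30 | h3pos
                · have h41 : s₄ = 1 := by omega
                  rw [quadLab_four (by omega), he₀def, dif_neg (hs₄1 h41)]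
                  intro hisH
                  exact hll_ne (q.vert jq₀) hAq (by rw [show jq₀ = iq₁ by omega]; exact hBq)
                    (show l₀ = l₁ from hisH)
                · rw [quadLab_three (by omega) (by omega),
                    show iq₁ - 1 - (s₁ + 1 - s₁ - s₂) = iq₁ - 1 by omega]
                  exact fun hisH => hentq (by omega) hisH
              · rw [show s₁ + 1 = n by omega, Nat.mod_self]
                have h1pos : 1 ≤ s₁ := by omega
                rw [quadLab_one (by omega)]
                intro hisH
                have hpjp : p.vert jp₀ ∈ B₁ := by
                  rw [← hs₄0 (by omega), show jq₀ = iq₁ by omega]; exact hBq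
                have hgc := geo_coset hp hB₁ hpjp hBmem hpo (hpk' ip₁ le_rfl)
                apply hentp (by omega)
                rwa [show ip₁ - 1 = jp₀ + 0 by omega]
      have hiso : P.IsolatedAt l₁ s₁ (s₁+1) := by
        unfold RPolygon.IsolatedAt
        refine ⟨hcomp, ?_⟩
        intro i' j' hcomp' hne' hmem'
        unfold RPolygon.CompAt at hcomp'
        rw [hPn, hPl] at hcomp'
        rw [hPn] at hne'
        rw [hPn, hPv] at hmem'
        obtain ⟨hij', hi'n, hj'n, hlab', -⟩ := hcomp'
        rw [Nat.mod_eq_of_lt (show s₁ < n by omega), Nat.mod_eq_of_lt hi'n] at hne' hmem'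
        have hfirst : (Lb i').1.isH l₁ := by
          have hx := hlab' i' le_rfl hij'
          rwa [Nat.mod_eq_of_lt hi'n] at hx
        rw [hVts₁] at hmem'
        have hVi' : Vt i' ∈ B₁ := hB₁.mul_mem' hBmem hmem'
        rcases lt_or_ge i' s₁ with h1 | h1
        · have hlabp : (p.lab (jp₀+i')).1.isH l₁ := by
            rwa [hLbdef, quadLab_one h1] at hfirst
          have hpv : p.vert (jp₀+i') ∈ B₁ := by rwa [hVt1 i' h1.le] at hVi'
          have hgc := geo_coset hp hB₁ hpv hBmem (by omega) (hpk' ip₁ le_rfl)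
          apply hentp (by omega)
          rwa [show jp₀ + i' = ip₁ - 1 by omega] at hlabp
        · rcases lt_or_ge i' (s₁+s₂) with h2 | h2
          · have hii : i' = s₁ := by omega
            exact hne' hii
          · rcases lt_or_ge i' (s₁+s₂+s₃) with h3 | h3
            · set m := iq₁ - 1 - (i' - s₁ - s₂) with hmdef
              have hm1 : m + 1 = iq₁ - (i' - s₁ - s₂) := by omega
              have hlabq : (q.lab m).1.isH l₁ := by
                rw [hLbdef, quadLab_three h2 h3, ← hmdef] at hfirst
                exact hfirst
              have hqv1 : q.vert (m+1) ∈ B₁ := by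
                rw [hVt2 i' h2 h3.le, ← hm1] at hVi'
                exact hVi'
              have hqv : q.vert m ∈ B₁ := by
                refine hB₁.mem_of_mul_mem ?_ (isH_edgeVal_mem hlabq)
                rw [← q.step m (hqk m (by omega))]
                exact hqv1
              have hgc := geo_coset hq hB₁ hqv hBq (by omega) (hqk' iq₁ le_rfl)
              apply hentq (by omega)
              rwa [show m = iq₁ - 1 by omega] at hlabq
            · have hs4 : s₄ = 1 := by omega
              have hii : i' = s₁+s₂+s₃ := by omega
              subst hii
              rw [hLbdef, quadLab_four le_rfl, he₀def, dif_neg (hs₄1 hs4)] at hfirst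
              exact hll_ne (q.vert jq₀) hAq (by rwa [hVtq] at hVi')
                (show l₀ = l₁ from hfirst)
      have hkey := hCB P l₁ s₁ (s₁+1) hiso
      rw [hPv, hPn, hPm] at hkey
      rw [Nat.mod_eq_of_lt (by omega)] at hkey
      have hVtj : Vt ((s₁+1) % n) = q.vert iq₁ := by
        rcases lt_or_ge (s₁+1) n with h | h
        · rw [Nat.mod_eq_of_lt h, show s₁+1 = s₁+s₂ by omega, hVtmid]
        · rw [show (s₁+1) % n = 0 by rw [show s₁+1 = n by omega]; exact Nat.mod_self n,
            hVt0, ← hs₄0 (by omega), show jq₀ = iq₁ by omega]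
      rw [hVtj, hVts₁] at hkey
      convert hkey using 2 <;> norm_num


end Statement8Aux

end ArXiv

namespace ArXiv

/-- Lemma 3.4: two geodesics penetrating two distinct cosets in the
same order have exit points of the first coset (resp. entrance points of the second)
at relative distance at most `4C`. -/
theorem statement8 {G Λ : Type*} [Group G] (X : Set G) (H : Λ → Subgroup G)
    (hemb : HypEmb X H) (Cc : ℝ) (hC : 0 < Cc) (hCB : CBound X H Cc)
    (l₀ l₁ : Λ) (B₀ B₁ : Set G) (hB₀ : Coset H l₀ B₀) (hB₁ : Coset H l₁ B₁)
    (hne : (⟨l₀, B₀⟩ : Λ × Set G) ≠ ⟨l₁, B₁⟩)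
    (p q : RPath X H) (hp : p.IsGeodesic) (hq : q.IsGeodesic)
    (ip₀ jp₀ ip₁ jp₁ iq₀ jq₀ iq₁ jq₁ : ℕ)
    (hpB₀ : p.PenetratesAt l₀ B₀ ip₀ jp₀) (hpB₁ : p.PenetratesAt l₁ B₁ ip₁ jp₁)
    (hqB₀ : q.PenetratesAt l₀ B₀ iq₀ jq₀) (hqB₁ : q.PenetratesAt l₁ B₁ iq₁ jq₁)
    (hordp : rdistPtSet X H (p.vert 0) B₀ < rdistPtSet X H (p.vert 0) B₁)
    (hordq : rdistPtSet X H (q.vert 0) B₀ < rdistPtSet X H (q.vert 0) B₁) :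
    hatd X H l₀ (p.vert jp₀) (q.vert jq₀) ≤ ENNReal.ofReal (4 * Cc) ∧
    hatd X H l₁ (p.vert ip₁) (q.vert iq₁) ≤ ENNReal.ofReal (4 * Cc) := by
  obtain ⟨hgen, -, -⟩ := hemb
  have hpo : jp₀ ≤ ip₁ := pen_order hgen hp hB₀ hB₁ hne hpB₀ hpB₁ hordp
  have hqo : jq₀ ≤ iq₁ := pen_order hgen hq hB₀ hB₁ hne hqB₀ hqB₁ hordq
  obtain ⟨h1, h2⟩ := master hgen hCB hB₀ hB₁ hne hp hq hpB₀ hpB₁ hqB₀ hqB₁ hpo hqo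
  exact ⟨by rwa [hatd_comm], h2⟩

end ArXiv
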